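/- arXiv:2306.12772 — 3 statements merged into one kernel-verified Lean document; each statement's English description precedes it below -/
import Mathlib

section
/- Let H be a separable real Hilbert space with orthonormal basis (e_i)_{i∈ℕ}. Let S : H → H be a bounded self-adjoint linear operator with S e_i = μ_i e_i for all i, where μ_i > 0, and let T : H → H be a bounded self-adjoint linear operator satisfying ∑_{i=0}^∞ ‖T e_i‖² < ∞. Then for every ε > 0 there exists a constant C = C(ε) > 0 such that ⟨T u, u⟩ ≤ ε ‖u‖² + C ‖S u‖² for all u ∈ H. -/
open scoped RealInnerProductSpace

set_option maxHeartbeats 1000000 in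
/-- Let `H` be a separable real Hilbert space with orthonormal basis
`(e_i)_{i∈ℕ}`. Let `S : H → H` be a bounded self-adjoint operator with `S e_i = μ_i e_i`,
`μ_i > 0`, and let `T : H → H` be a bounded self-adjoint operator with `∑ ‖T e_i‖² < ∞`.
Then for every `ε > 0` there is `C = C(ε) > 0` with
`⟨T u, u⟩ ≤ ε ‖u‖² + C ‖S u‖² for all `u ∈ H`. -/
theorem stmt_7 {H : Type*} [NormedAddCommGroup H] [InnerProductSpace ℝ H]
    [CompleteSpace H]
    (e : HilbertBasis ℕ ℝ H)
    (S : H →L[ℝ] H) (hSsa : IsSelfAdjoint S)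
    (μ : ℕ → ℝ) (hμpos : ∀ i, 0 < μ i) (hSe : ∀ i, S (e i) = μ i • e i)
    (T : H →L[ℝ] H) (hTsa : IsSelfAdjoint T)
    (hHS : Summable fun i => ‖T (e i)‖ ^ 2) :
    ∀ ε : ℝ, 0 < ε → ∃ C : ℝ, 0 < C ∧
      ∀ u : H, (inner ℝ (T u) u : ℝ) ≤ ε * ‖u‖ ^ 2 + C * ‖S u‖ ^ 2 := by
  intro ε hε
  have hTadj : ∀ x y : H, ⟪T x, y⟫ = ⟪x, T y⟫ := by
    intro x y
    conv_lhs => rw [← hTsa.adjoint_eq]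
    exact ContinuousLinearMap.adjoint_inner_left T y x
  have hSadj : ∀ x y : H, ⟪S x, y⟫ = ⟪x, S y⟫ := by
    intro x y
    conv_lhs => rw [← hSsa.adjoint_eq]
    exact ContinuousLinearMap.adjoint_inner_left S y x
  -- choose N with small tail
  obtain ⟨N, hN⟩ : ∃ N, ∑' i, ‖T (e (i + N))‖ ^ 2 ≤ ε ^ 2 / 4 := by
    have ht := tendsto_sum_nat_add (fun i => ‖T (e i)‖ ^ 2)
    have : ∀ᶠ n in Filter.atTop, ∑' i, ‖T (e (i + n))‖ ^ 2 ≤ ε ^ 2 / 4 := by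
      have := ht.eventually_le_const (show (0:ℝ) < ε ^ 2 / 4 by positivity)
      simpa using this
    exact this.exists
  set K : ℝ := ∑ i ∈ Finset.range N, ‖T (e i)‖ / μ i with hK
  have hK0 : 0 ≤ K := Finset.sum_nonneg fun i _ =>
    div_nonneg (norm_nonneg _) (hμpos i).le
  refine ⟨K ^ 2 / (2 * ε) + 1, by positivity, fun u => ?_⟩
  -- coefficient bound via S
  have hcoef : ∀ i, |⟪u, e i⟫| ≤ ‖S u‖ / μ i := by
    intro i
    have h1 : ⟪S u, e i⟫ = μ i * ⟪u, e i⟫ := by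
      rw [hSadj, hSe i, real_inner_smul_right]
    have h2 : |⟪S u, e i⟫| ≤ ‖S u‖ := by
      calc |⟪S u, e i⟫| ≤ ‖S u‖ * ‖e i‖ := abs_real_inner_le_norm _ _
        _ = ‖S u‖ := by rw [e.orthonormal.1 i, mul_one]
    rw [le_div_iff₀ (hμpos i)]
    calc |⟪u, e i⟫| * μ i = |μ i * ⟪u, e i⟫| := by
          rw [abs_mul, abs_of_pos (hμpos i), mul_comm]
      _ = |⟪S u, e i⟫| := by rw [h1]
      _ ≤ ‖S u‖ := h2
  -- expansion
  have hsum : Summable (fun i => ⟪u, e i⟫ * ⟪e i, T u⟫) :=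
    e.summable_inner_mul_inner u (T u)
  have heq : ⟪T u, u⟫ = ∑' i, ⟪u, e i⟫ * ⟪e i, T u⟫ := by
    rw [e.tsum_inner_mul_inner u (T u), real_inner_comm]
  have hsplit := Summable.sum_add_tsum_nat_add (f := fun i => ⟪u, e i⟫ * ⟪e i, T u⟫) N hsum
  -- term bound
  have hterm : ∀ i, ⟪u, e i⟫ * ⟪e i, T u⟫ ≤ |⟪u, e i⟫| * (‖T (e i)‖ * ‖u‖) := by
    intro i
    have h3 : ⟪e i, T u⟫ = ⟪T (e i), u⟫ := (hTadj (e i) u).symm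
    calc ⟪u, e i⟫ * ⟪e i, T u⟫ ≤ |⟪u, e i⟫ * ⟪e i, T u⟫| := le_abs_self _
      _ = |⟪u, e i⟫| * |⟪T (e i), u⟫| := by rw [abs_mul, h3]
      _ ≤ |⟪u, e i⟫| * (‖T (e i)‖ * ‖u‖) :=
          mul_le_mul_of_nonneg_left (abs_real_inner_le_norm _ _) (abs_nonneg _)
  -- finite part
  have hfin : ∑ i ∈ Finset.range N, ⟪u, e i⟫ * ⟪e i, T u⟫ ≤ K * (‖S u‖ * ‖u‖) := by
    rw [hK, Finset.sum_mul]
    refine Finset.sum_le_sum fun i _ => ?_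
    calc ⟪u, e i⟫ * ⟪e i, T u⟫ ≤ |⟪u, e i⟫| * (‖T (e i)‖ * ‖u‖) := hterm i
      _ ≤ (‖S u‖ / μ i) * (‖T (e i)‖ * ‖u‖) :=
          mul_le_mul_of_nonneg_right (hcoef i)
            (mul_nonneg (norm_nonneg _) (norm_nonneg _))
      _ = ‖T (e i)‖ / μ i * (‖S u‖ * ‖u‖) := by ring
  -- squared coefficients
  have hcu : Summable (fun i => ⟪u, e i⟫ ^ 2) := by
    refine (e.summable_inner_mul_inner u u).congr fun i => ?_
    rw [real_inner_comm (e i) u, sq]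
  have hcusum : ∑' i, ⟪u, e i⟫ ^ 2 = ‖u‖ ^ 2 := by
    rw [← real_inner_self_eq_norm_sq, ← e.tsum_inner_mul_inner u u]
    exact tsum_congr fun i => by rw [real_inner_comm (e i) u, sq]
  have hcutail : ∑' i, ⟪u, e (i + N)⟫ ^ 2 ≤ ‖u‖ ^ 2 := by
    have h := Summable.sum_add_tsum_nat_add (f := fun i => ⟪u, e i⟫ ^ 2) N hcu
    have hnn : (0:ℝ) ≤ ∑ i ∈ Finset.range N, ⟪u, e i⟫ ^ 2 :=
      Finset.sum_nonneg fun i _ => sq_nonneg _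
    rw [hcusum] at h
    linarith
  -- tail part
  have hsumsh : Summable (fun i => ⟪u, e (i + N)⟫ * ⟪e (i + N), T u⟫) :=
    (summable_nat_add_iff N).mpr hsum
  have hcush : Summable (fun i => ⟪u, e (i + N)⟫ ^ 2) := (summable_nat_add_iff N).mpr hcu
  have hHSsh : Summable (fun i => ‖T (e (i + N))‖ ^ 2) := (summable_nat_add_iff N).mpr hHS
  have htb : ∀ i, ⟪u, e (i + N)⟫ * ⟪e (i + N), T u⟫ ≤
      ε / 4 * ⟪u, e (i + N)⟫ ^ 2 + 1 / ε * (‖T (e (i + N))‖ ^ 2 * ‖u‖ ^ 2) := by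
    intro i
    have h1 := hterm (i + N)
    have h2 : |⟪u, e (i + N)⟫| * (‖T (e (i + N))‖ * ‖u‖) ≤
        ε / 4 * ⟪u, e (i + N)⟫ ^ 2 + 1 / ε * (‖T (e (i + N))‖ ^ 2 * ‖u‖ ^ 2) := by
      have h4 : |⟪u, e (i + N)⟫| ^ 2 = ⟪u, e (i + N)⟫ ^ 2 := sq_abs _
      have h3 := sq_nonneg (ε * |⟪u, e (i + N)⟫| / 2 - ‖T (e (i + N))‖ * ‖u‖)
      have h4 : |⟪u, e (i + N)⟫| ^ 2 = ⟪u, e (i + N)⟫ ^ 2 := sq_abs _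
      have h5 : 0 < ε := hε
      rw [← sub_nonneg]
      have key : 0 ≤ (ε / 4 * ⟪u, e (i + N)⟫ ^ 2 + 1 / ε * (‖T (e (i + N))‖ ^ 2 * ‖u‖ ^ 2) -
          |⟪u, e (i + N)⟫| * (‖T (e (i + N))‖ * ‖u‖)) * ε := by
        have hexp : (ε / 4 * ⟪u, e (i + N)⟫ ^ 2 + 1 / ε * (‖T (e (i + N))‖ ^ 2 * ‖u‖ ^ 2) -
            |⟪u, e (i + N)⟫| * (‖T (e (i + N))‖ * ‖u‖)) * ε =
            (ε * |⟪u, e (i + N)⟫| / 2 - ‖T (e (i + N))‖ * ‖u‖) ^ 2 := by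
          field_simp
          rw [← h4]
          ring
        rw [hexp]; exact h3
      nlinarith [key, h5]
    linarith
  have htail : ∑' i, ⟪u, e (i + N)⟫ * ⟪e (i + N), T u⟫ ≤ ε / 2 * ‖u‖ ^ 2 := by
    have hb : Summable (fun i => ε / 4 * ⟪u, e (i + N)⟫ ^ 2 +
        1 / ε * (‖T (e (i + N))‖ ^ 2 * ‖u‖ ^ 2)) :=
      ((hcush.mul_left _).add ((hHSsh.mul_right _).mul_left _))
    calc ∑' i, ⟪u, e (i + N)⟫ * ⟪e (i + N), T u⟫
        ≤ ∑' i, (ε / 4 * ⟪u, e (i + N)⟫ ^ 2 +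
            1 / ε * (‖T (e (i + N))‖ ^ 2 * ‖u‖ ^ 2)) :=
          Summable.tsum_le_tsum htb hsumsh hb
      _ = ε / 4 * (∑' i, ⟪u, e (i + N)⟫ ^ 2) +
            1 / ε * ((∑' i, ‖T (e (i + N))‖ ^ 2) * ‖u‖ ^ 2) := by
          rw [Summable.tsum_add (hcush.mul_left _) ((hHSsh.mul_right _).mul_left _),
            tsum_mul_left, tsum_mul_left, tsum_mul_right]
      _ ≤ ε / 4 * ‖u‖ ^ 2 + 1 / ε * (ε ^ 2 / 4 * ‖u‖ ^ 2) := by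
          gcongr
      _ = ε / 2 * ‖u‖ ^ 2 := by field_simp; ring
  -- assemble
  have hmain : ⟪T u, u⟫ ≤ K * (‖S u‖ * ‖u‖) + ε / 2 * ‖u‖ ^ 2 := by
    rw [heq, ← hsplit]
    exact add_le_add hfin htail
  have hAM : K * (‖S u‖ * ‖u‖) ≤ ε / 2 * ‖u‖ ^ 2 + K ^ 2 / (2 * ε) * ‖S u‖ ^ 2 := by
    have heq3 : ε / 2 * ‖u‖ ^ 2 + K ^ 2 / (2 * ε) * ‖S u‖ ^ 2 - K * (‖S u‖ * ‖u‖) =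
        (ε * ‖u‖ - K * ‖S u‖) ^ 2 / (2 * ε) := by field_simp; ring
    rw [← sub_nonneg, heq3]
    positivity
  have hSu2 : (0:ℝ) ≤ ‖S u‖ ^ 2 := sq_nonneg _
  calc (inner ℝ (T u) u : ℝ) ≤ K * (‖S u‖ * ‖u‖) + ε / 2 * ‖u‖ ^ 2 := hmain
    _ ≤ ε / 2 * ‖u‖ ^ 2 + K ^ 2 / (2 * ε) * ‖S u‖ ^ 2 + ε / 2 * ‖u‖ ^ 2 :=
        add_le_add_left hAM _
    _ ≤ ε * ‖u‖ ^ 2 + (K ^ 2 / (2 * ε) + 1) * ‖S u‖ ^ 2 := by nlinarith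
end

section
/- Assume 0 ∈ γ(0), and let m₋ < 0 < m₊ with m₋, m₊ ∈ dom(γ), and let m ∈ (m₋, m₊). Then there exist constants M₁ > 0 and M₂ ∈ ℝ, depending only on m, m₋, m₊ and on subgradients of ŷ at m₋ and m₊ (but not on λ), such that for every λ > 0 and every r ∈ ℝ one has M₁ |γ_λ(r)| + M₂ ≤ γ_λ(r) (r − m); moreover one may take M₁ = min(m − m₋, m₊ − m). -/
lemma aux_small (C D : ℝ) (hC : 0 ≤ C) (h : ∀ t : ℝ, 0 < t → t ≤ 1 → D ≤ t * C) : D ≤ 0 := by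
  by_contra h'
  push_neg at h'
  rcases eq_or_lt_of_le hC with hC0 | hC0
  · have := h 1 one_pos le_rfl; nlinarith
  · have ht1 : 0 < D / (2*C) := by positivity
    have h2 := h (min 1 (D/(2*C))) (lt_min one_pos ht1) (min_le_left _ _)
    have hle : min 1 (D/(2*C)) * C ≤ (D/(2*C))*C :=
      mul_le_mul_of_nonneg_right (min_le_right _ _) hC
    have heq : (D/(2*C))*C = D/2 := by field_simp
    linarith

set_option maxHeartbeats 1600000 in
/-- Assume `0 ∈ γ(0)`, let `m₋ < 0 < m₊` with `m₋, m₊ ∈ dom(γ)`, and let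
`m ∈ (m₋, m₊)`. Then there exist `M₁ > 0` (one may take `M₁ = min(m − m₋, m₊ − m)`) and
`M₂ ∈ ℝ`, independent of `λ`, such that for all `λ > 0` and `r ∈ ℝ`:
`M₁ |γ_λ(r)| + M₂ ≤ γ_λ(r)(r − m)`, where `γ_λ(r) = (r − J_λ(r))/λ` and `J_λ(r)` is the
minimizer of `y ↦ (1/(2λ))(y−r)² + ŷ(y)`. -/
theorem stmt_15 (yhat : ℝ → EReal)
    (hproper : ∃ x, yhat x ≠ ⊤) (hnobot : ∀ x, yhat x ≠ ⊥)
    (hconv : ∀ x y a b : ℝ, 0 ≤ a → 0 ≤ b → a + b = 1 →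
      yhat (a * x + b * y) ≤ (a : EReal) * yhat x + (b : EReal) * yhat y)
    (hlsc : LowerSemicontinuous yhat)
    (h0 : ∀ y : ℝ, yhat 0 + (((0 : ℝ) * (y - 0) : ℝ) : EReal) ≤ yhat y)
    (mminus mplus m : ℝ) (hmminus : mminus < 0) (hmplus : 0 < mplus)
    (hdomminus : ∃ p : ℝ, ∀ y : ℝ, yhat mminus + ((p * (y - mminus) : ℝ) : EReal) ≤ yhat y)
    (hdomplus : ∃ p : ℝ, ∀ y : ℝ, yhat mplus + ((p * (y - mplus) : ℝ) : EReal) ≤ yhat y)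
    (hm₁ : mminus < m) (hm₂ : m < mplus) :
    ∃ M₁ M₂ : ℝ, 0 < M₁ ∧ M₁ = min (m - mminus) (mplus - m) ∧
      ∀ l : ℝ, 0 < l → ∀ r jl : ℝ,
        (∀ z : ℝ, ((1 / (2 * l) * (jl - r) ^ 2 : ℝ) : EReal) + yhat jl
          ≤ ((1 / (2 * l) * (z - r) ^ 2 : ℝ) : EReal) + yhat z) →
        M₁ * |(r - jl) / l| + M₂ ≤ (r - jl) / l * (r - m) := by
  obtain ⟨x₀, hx₀⟩ := hproper
  obtain ⟨pp, hpp⟩ := hdomplus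
  obtain ⟨pm, hpm⟩ := hdomminus
  -- finiteness at 0
  have h0top : yhat 0 ≠ ⊤ := by
    intro h
    have h1 := h0 x₀
    rw [h] at h1
    simp at h1
    exact hx₀ h1
  have hY0 : yhat 0 = (((yhat 0).toReal : ℝ) : EReal) := (EReal.coe_toReal h0top (hnobot 0)).symm
  set Y0 : ℝ := (yhat 0).toReal with hY0def
  -- finiteness at mplus
  have hptop : yhat mplus ≠ ⊤ := by
    intro h
    have h1 := hpp 0
    rw [h, hY0, EReal.top_add_coe] at h1
    exact EReal.coe_ne_top Y0 (top_le_iff.1 h1)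
  have hYp : yhat mplus = (((yhat mplus).toReal : ℝ) : EReal) :=
    (EReal.coe_toReal hptop (hnobot mplus)).symm
  set Yp : ℝ := (yhat mplus).toReal with hYpdef
  -- finiteness at mminus
  have hmtop : yhat mminus ≠ ⊤ := by
    intro h
    have h1 := hpm 0
    rw [h, hY0, EReal.top_add_coe] at h1
    exact EReal.coe_ne_top Y0 (top_le_iff.1 h1)
  have hYm : yhat mminus = (((yhat mminus).toReal : ℝ) : EReal) :=
    (EReal.coe_toReal hmtop (hnobot mminus)).symm
  set Ym : ℝ := (yhat mminus).toReal with hYmdef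
  -- sign of pp, pm
  have hppos : 0 ≤ pp := by
    have e1 : (Y0 : EReal) ≤ (Yp : EReal) := by
      have := h0 mplus; rw [hY0, hYp] at this; simpa using this
    have e1' : Y0 ≤ Yp := by exact_mod_cast e1
    have e2 : Yp + pp * (0 - mplus) ≤ Y0 := by
      have := hpp 0; rw [hY0, hYp] at this; exact_mod_cast this
    nlinarith
  have hpmneg : pm ≤ 0 := by
    have e1 : (Y0 : EReal) ≤ (Ym : EReal) := by
      have := h0 mminus; rw [hY0, hYm] at this; simpa using this
    have e1' : Y0 ≤ Ym := by exact_mod_cast e1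
    have e2 : Ym + pm * (0 - mminus) ≤ Y0 := by
      have := hpm 0; rw [hY0, hYm] at this; exact_mod_cast this
    nlinarith
  refine ⟨min (m - mminus) (mplus - m),
    -(min (m - mminus) (mplus - m) + |m|) * (|pp| + |pm|),
    lt_min (by linarith) (by linarith), rfl, ?_⟩
  intro l hl r jl hmin
  set M₁ := min (m - mminus) (mplus - m) with hM₁
  have hM₁pos : 0 < M₁ := lt_min (by linarith) (by linarith)
  have hM₁le1 : M₁ ≤ m - mminus := min_le_left _ _
  have hM₁le2 : M₁ ≤ mplus - m := min_le_right _ _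
  -- finiteness at jl
  have hjtop : yhat jl ≠ ⊤ := by
    intro h
    have h1 := hmin mplus
    rw [h, hYp, EReal.coe_add_top] at h1
    have h2 : ((1 / (2 * l) * (mplus - r) ^ 2 : ℝ) : EReal) + ((Yp : ℝ) : EReal)
        = (((1 / (2 * l) * (mplus - r) ^ 2 + Yp : ℝ)) : EReal) := by norm_cast
    rw [h2] at h1
    exact EReal.coe_ne_top _ (top_le_iff.1 h1)
  have hYj : yhat jl = (((yhat jl).toReal : ℝ) : EReal) :=
    (EReal.coe_toReal hjtop (hnobot jl)).symm
  set Yj : ℝ := (yhat jl).toReal with hYjdef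
  -- key monotonicity lemma
  have key : ∀ (x p Yx : ℝ), yhat x = ((Yx : ℝ) : EReal) →
      (∀ y : ℝ, yhat x + ((p * (y - x) : ℝ) : EReal) ≤ yhat y) →
      0 ≤ ((r - jl) / l - p) * (jl - x) := by
    intro x p Yx hYx hp
    have hsub : Yx + p * (jl - x) ≤ Yj := by
      have := hp jl; rw [hYx, hYj] at this; exact_mod_cast this
    have hstep : ∀ t : ℝ, 0 < t → t ≤ 1 →
        2*(r-jl)*(x-jl) + 2*l*p*(jl-x) ≤ t * (x-jl)^2 := by
      intro t ht ht1
      have hconv' := hconv jl x (1-t) t (by linarith) ht.le (by ring)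
      rw [hYx, hYj] at hconv'
      have hcz : ((1-t : ℝ) : EReal) * ((Yj : ℝ) : EReal) + ((t : ℝ) : EReal) * ((Yx : ℝ) : EReal)
          = (((1-t)*Yj + t*Yx : ℝ) : EReal) := by norm_cast
      rw [hcz] at hconv'
      have hm' := hmin ((1-t)*jl + t*x)
      rw [hYj] at hm'
      have hm2 : ((1 / (2 * l) * (jl - r) ^ 2 : ℝ) : EReal) + ((Yj : ℝ) : EReal)
          ≤ ((1 / (2 * l) * (((1-t)*jl + t*x) - r) ^ 2 : ℝ) : EReal)
            + (((1-t)*Yj + t*Yx : ℝ) : EReal) :=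
        le_trans hm' (add_le_add_right hconv' _)
      have hm3 : 1 / (2 * l) * (jl - r) ^ 2 + Yj
          ≤ 1 / (2 * l) * (((1-t)*jl + t*x) - r) ^ 2 + ((1-t)*Yj + t*Yx) := by
        exact_mod_cast hm2
      have hm4 : (jl-r)^2 + 2*l*Yj ≤ (((1-t)*jl + t*x) - r)^2 + 2*l*((1-t)*Yj + t*Yx) := by
        have h2l : (0:ℝ) < 2*l := by linarith
        have := mul_le_mul_of_nonneg_left hm3 h2l.le
        have hne : (2*l : ℝ) ≠ 0 := ne_of_gt h2l
        field_simp at this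
        nlinarith [this]
      have hmul : t * (2*(r-jl)*(x-jl) + 2*l*p*(jl-x)) ≤ t * (t * (x-jl)^2) := by
        nlinarith [mul_le_mul_of_nonneg_left hsub (by positivity : (0:ℝ) ≤ 2*l*t)]
      exact le_of_mul_le_mul_left hmul ht
    have hD := aux_small ((x-jl)^2) _ (sq_nonneg _) hstep
    have hfin : ((r - jl) / l - p) * (jl - x)
        = (-(2*(r-jl)*(x-jl) + 2*l*p*(jl-x))) / (2*l) := by
      field_simp
      ring
    rw [hfin]
    exact div_nonneg (by linarith) (by linarith)
  have k0 := key 0 0 Y0 hY0 h0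
  have kp := key mplus pp Yp hYp hpp
  have km := key mminus pm Ym hYm hpm
  -- final case analysis
  obtain ⟨g, hg⟩ : ∃ g : ℝ, (r - jl) / l = g := ⟨_, rfl⟩
  rw [hg] at k0 kp km ⊢
  have hrjl : r - jl = l * g := by
    rw [← hg]; field_simp
  clear_value Y0 Yp Ym Yj M₁
  clear hmin hconv hlsc h0 hpp hpm key hY0 hYp hYm hYj hx₀ h0top hptop hmtop hjtop hg
  have k0' : 0 ≤ g * jl := by nlinarith [k0]
  have habs_m := le_abs_self m
  have habs_m' := neg_abs_le m
  have habs_pp := le_abs_self pp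
  have habs_pm := neg_abs_le pm
  have habs_pp0 := abs_nonneg pp
  have habs_pm0 := abs_nonneg pm
  have habs_m0 := abs_nonneg m
  have hexp : g * (r - m) = g * (jl - m) + l * (g * g) := by
    have : r - m = (jl - m) + l * g := by linarith
    rw [this]; ring
  have hM₂ : -(M₁ + |m|) * (|pp| + |pm|) ≤ 0 := by
    have h1 : 0 ≤ (M₁ + |m|) * (|pp| + |pm|) :=
      mul_nonneg (by linarith) (by linarith)
    linarith
  rcases lt_trichotomy g 0 with hgneg | hgzero | hgpos
  · -- g < 0 : jl ≤ 0
    rw [abs_of_neg hgneg]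
    have hlg : 0 ≤ l * (g * g) := mul_nonneg hl.le (mul_self_nonneg g)
    have hjl0 : jl ≤ 0 := by nlinarith [k0']
    by_cases hgm : g < pm
    · -- jl ≤ mminus
      have hjlm : jl ≤ mminus := by nlinarith [km]
      have h1 : (-g) * M₁ ≤ g * (jl - m) := by nlinarith
      linarith [hexp, hM₂, hlg, h1]
    · push_neg at hgm
      have hgabs : -g ≤ |pm| := by linarith
      have h1 : -(|pm| * |m|) ≤ g * (jl - m) := by
        nlinarith [mul_nonneg (show (0:ℝ) ≤ g + |pm| by linarith) habs_m0,
          mul_nonneg (show (0:ℝ) ≤ -g by linarith) (show (0:ℝ) ≤ |m| + m by linarith)]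
      have c1 : M₁ * (-g) ≤ M₁ * |pm| := mul_le_mul_of_nonneg_left hgabs hM₁pos.le
      have c2 : -(M₁ + |m|) * (|pp| + |pm|) ≤ -(M₁ + |m|) * |pm| := by
        nlinarith [mul_nonneg (show (0:ℝ) ≤ M₁ + |m| by linarith) habs_pp0]
      have c3 : -(M₁ + |m|) * |pm| = -(M₁ * |pm|) - |m| * |pm| := by ring
      linarith [hexp, hlg, h1, c1, c2]
  · rw [hgzero]
    simp only [abs_zero, mul_zero, zero_mul, zero_add]
    exact hM₂
  · -- g > 0 : jl ≥ 0
    rw [abs_of_pos hgpos]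
    have hlg : 0 ≤ l * (g * g) := mul_nonneg hl.le (mul_self_nonneg g)
    have hjl0 : 0 ≤ jl := by nlinarith [k0']
    by_cases hgp : pp < g
    · -- jl ≥ mplus
      have hjlp : mplus ≤ jl := by nlinarith [kp]
      have h1 : g * M₁ ≤ g * (jl - m) := by nlinarith
      linarith [hexp, hM₂, hlg, h1]
    · push_neg at hgp
      have hgabs : g ≤ |pp| := le_trans hgp habs_pp
      have h1 : -(|pp| * |m|) ≤ g * (jl - m) := by
        nlinarith [mul_nonneg (show (0:ℝ) ≤ |pp| - g by linarith) habs_m0,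
          mul_nonneg hgpos.le (show (0:ℝ) ≤ |m| - m by linarith)]
      have c1 : M₁ * g ≤ M₁ * |pp| := mul_le_mul_of_nonneg_left hgabs hM₁pos.le
      have c2 : -(M₁ + |m|) * (|pp| + |pm|) ≤ -(M₁ + |m|) * |pp| := by
        nlinarith [mul_nonneg (show (0:ℝ) ≤ M₁ + |m| by linarith) habs_pm0]
      have c3 : -(M₁ + |m|) * |pp| = -(M₁ * |pp|) - |m| * |pp| := by ring
      linarith [hexp, hlg, h1, c1, c2]
end

section
/- Let (X, μ) be a measure space, let λ₁, λ₂ > 0, and let u₁, u₂ : X → ℝ be measurable functions such that g₁ := γ_{λ₁} ∘ u₁ and g₂ := γ_{λ₂} ∘ u₂ belong to L²(μ) and the function (g₁ − g₂)(u₁ − u₂) is integrable. Then − ∫_X (g₁ − g₂)(u₁ − u₂) dμ ≤ (λ₁ + λ₂) ‖g₁‖_{L²(μ)} ‖g₂‖_{L²(μ)}. -/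
open MeasureTheory

private lemma aux_finite (yhat : ℝ → EReal)
    (hproper : ∃ x, yhat x ≠ ⊤) (hnobot : ∀ x, yhat x ≠ ⊥)
    (l : ℝ) (R : ℝ → ℝ)
    (hR : ∀ x z : ℝ, ((1 / (2 * l) * (R x - x) ^ 2 : ℝ) : EReal) + yhat (R x)
      ≤ ((1 / (2 * l) * (z - x) ^ 2 : ℝ) : EReal) + yhat z)
    (a : ℝ) : ∃ v : ℝ, yhat (R a) = (v : EReal) := by
  obtain ⟨x₀, hx₀⟩ := hproper
  have h := hR a x₀
  have htop : yhat (R a) ≠ ⊤ := by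
    intro hT
    rw [hT] at h
    have h1 : ((1 / (2 * l) * (R a - a) ^ 2 : ℝ) : EReal) + (⊤ : EReal) = ⊤ := by
      exact EReal.coe_add_top _
    rw [h1] at h
    have h2 : ((1 / (2 * l) * (x₀ - a) ^ 2 : ℝ) : EReal) + yhat x₀ < ⊤ :=
      EReal.add_lt_top (EReal.coe_ne_top _) hx₀
    exact absurd (top_le_iff.mp h) (ne_of_lt h2)
  exact ⟨(yhat (R a)).toReal, (EReal.coe_toReal htop (hnobot _)).symm⟩

private lemma aux_subgrad (yhat : ℝ → EReal)
    (hconv : ∀ x y a b : ℝ, 0 ≤ a → 0 ≤ b → a + b = 1 →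
      yhat (a * x + b * y) ≤ (a : EReal) * yhat x + (b : EReal) * yhat y)
    (l : ℝ) (hl : 0 < l) (R : ℝ → ℝ)
    (hR : ∀ x z : ℝ, ((1 / (2 * l) * (R x - x) ^ 2 : ℝ) : EReal) + yhat (R x)
      ≤ ((1 / (2 * l) * (z - x) ^ 2 : ℝ) : EReal) + yhat z)
    (a z : ℝ) (v w : ℝ) (hv : yhat (R a) = (v : EReal)) (hw : yhat z = (w : EReal)) :
    v + (a - R a) / l * (z - R a) ≤ w := by
  have key : ∀ t : ℝ, 0 < t → t ≤ 1 →
      v + (a - R a) / l * (z - R a) ≤ w + t * ((z - R a) ^ 2 / (2 * l)) := by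
    intro t ht0 ht1
    have hc := hconv (R a) z (1 - t) t (by linarith) ht0.le (by ring)
    rw [hv, hw, ← EReal.coe_mul, ← EReal.coe_mul, ← EReal.coe_add] at hc
    have h := hR a ((1 - t) * R a + t * z)
    have h2 : ((1 / (2 * l) * (R a - a) ^ 2 : ℝ) : EReal) + (v : EReal)
        ≤ (((1 / (2 * l) * ((1 - t) * R a + t * z - a) ^ 2) + ((1 - t) * v + t * w) : ℝ) : EReal) := by
      rw [EReal.coe_add, ← hv]
      calc ((1 / (2 * l) * (R a - a) ^ 2 : ℝ) : EReal) + yhat (R a)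
          ≤ ((1 / (2 * l) * ((1 - t) * R a + t * z - a) ^ 2 : ℝ) : EReal)
            + yhat ((1 - t) * R a + t * z) := h
        _ ≤ _ := by exact add_le_add_right hc _
    rw [← EReal.coe_add, EReal.coe_le_coe_iff] at h2
    have hl' : (0:ℝ) < 2 * l := by linarith
    have h5 : (2 * l) * (1 / (2 * l)) = 1 := by field_simp
    have h3 : (R a - a) ^ 2 + (2 * l) * v
        ≤ ((1 - t) * R a + t * z - a) ^ 2 + (2 * l) * ((1 - t) * v + t * w) := by
      nlinarith [mul_le_mul_of_nonneg_left h2 hl'.le, h5]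
    set P := (a - R a) / l with hPdef
    set Q := (z - R a) ^ 2 / (2 * l) with hQdef
    have haR : a - R a = l * P := by rw [hPdef]; field_simp
    have hq : (z - R a) ^ 2 = 2 * l * Q := by rw [hQdef]; field_simp
    have e1 : R a - a = -(l * P) := by linarith
    have e2 : (1 - t) * R a + t * z - a = t * (z - R a) - l * P := by linarith
    rw [e1, e2] at h3
    have hq2 : t ^ 2 * (z - R a) ^ 2 = t ^ 2 * (2 * l * Q) := by rw [hq]
    nlinarith [h3, hq2, mul_pos hl' ht0, mul_pos ht0 hl]
  have hC : 0 ≤ (z - R a) ^ 2 / (2 * l) := by positivity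
  refine le_of_forall_pos_le_add fun ε hε => ?_
  set C := (z - R a) ^ 2 / (2 * l)
  have ht0 : 0 < min 1 (ε / (C + 1)) := lt_min one_pos (by positivity)
  have := key _ ht0 (min_le_left _ _)
  have h2 : min 1 (ε / (C + 1)) * C ≤ ε := by
    calc min 1 (ε / (C + 1)) * C ≤ (ε / (C + 1)) * C :=
          mul_le_mul_of_nonneg_right (min_le_right _ _) hC
      _ ≤ ε := by
          rw [div_mul_eq_mul_div, div_le_iff₀ (by linarith)]
          nlinarith
  linarith

/-- Let `(X, μ)` be a measure space, `λ₁, λ₂ > 0`, and `u₁, u₂ : X → ℝ`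
measurable functions such that `g₁ := γ_{λ₁} ∘ u₁` and `g₂ := γ_{λ₂} ∘ u₂` belong to
`L²(μ)` and `(g₁ − g₂)(u₁ − u₂)` is integrable. Then
`− ∫_X (g₁ − g₂)(u₁ − u₂) dμ ≤ (λ₁ + λ₂) ‖g₁‖_{L²} ‖g₂‖_{L²}`.
Here `γ_λ(x) = (x − R_λ(x))/λ`, where the resolvent `R_λ(x)` is the minimizer of
`y ↦ (1/(2λ))(y−x)² + ŷ(y)`. -/
theorem stmt_17 {X : Type*} [MeasurableSpace X] (μ : Measure X)
    (yhat : ℝ → EReal)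
    (hproper : ∃ x, yhat x ≠ ⊤) (hnobot : ∀ x, yhat x ≠ ⊥)
    (hconv : ∀ x y a b : ℝ, 0 ≤ a → 0 ≤ b → a + b = 1 →
      yhat (a * x + b * y) ≤ (a : EReal) * yhat x + (b : EReal) * yhat y)
    (hlsc : LowerSemicontinuous yhat)
    (l₁ l₂ : ℝ) (hl₁ : 0 < l₁) (hl₂ : 0 < l₂)
    (u₁ u₂ : X → ℝ) (hu₁ : Measurable u₁) (hu₂ : Measurable u₂)
    (R₁ R₂ : ℝ → ℝ)
    (hR₁ : ∀ x z : ℝ, ((1 / (2 * l₁) * (R₁ x - x) ^ 2 : ℝ) : EReal) + yhat (R₁ x)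
      ≤ ((1 / (2 * l₁) * (z - x) ^ 2 : ℝ) : EReal) + yhat z)
    (hR₂ : ∀ x z : ℝ, ((1 / (2 * l₂) * (R₂ x - x) ^ 2 : ℝ) : EReal) + yhat (R₂ x)
      ≤ ((1 / (2 * l₂) * (z - x) ^ 2 : ℝ) : EReal) + yhat z)
    (g₁ g₂ : X → ℝ)
    (hg₁ : ∀ x : X, g₁ x = (u₁ x - R₁ (u₁ x)) / l₁)
    (hg₂ : ∀ x : X, g₂ x = (u₂ x - R₂ (u₂ x)) / l₂)
    (hg₁L2 : MemLp g₁ 2 μ) (hg₂L2 : MemLp g₂ 2 μ)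
    (hint : Integrable (fun x => (g₁ x - g₂ x) * (u₁ x - u₂ x)) μ) :
    - ∫ x, (g₁ x - g₂ x) * (u₁ x - u₂ x) ∂μ
      ≤ (l₁ + l₂) * (eLpNorm g₁ 2 μ).toReal * (eLpNorm g₂ 2 μ).toReal := by
  have hptwise : ∀ x : X, -((g₁ x - g₂ x) * (u₁ x - u₂ x))
      ≤ (l₁ + l₂) * (|g₁ x| * |g₂ x|) := by
    intro x
    set a := u₁ x with hadef
    set b := u₂ x with hbdef
    obtain ⟨v₁, hv₁⟩ := aux_finite yhat hproper hnobot l₁ R₁ hR₁ a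
    obtain ⟨v₂, hv₂⟩ := aux_finite yhat hproper hnobot l₂ R₂ hR₂ b
    have h1 := aux_subgrad yhat hconv l₁ hl₁ R₁ hR₁ a (R₂ b) v₁ v₂ hv₁ hv₂
    have h2 := aux_subgrad yhat hconv l₂ hl₂ R₂ hR₂ b (R₁ a) v₂ v₁ hv₂ hv₁
    rw [hg₁ x, hg₂ x]
    set p := (a - R₁ a) / l₁ with hpdef
    set q := (b - R₂ b) / l₂ with hqdef
    have ha : a = R₁ a + l₁ * p := by rw [hpdef]; field_simp; ring
    have hb : b = R₂ b + l₂ * q := by rw [hqdef]; field_simp; ring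
    have hmono : 0 ≤ (p - q) * (R₁ a - R₂ b) := by nlinarith [h1, h2]
    have habs : p * q ≤ |p| * |q| := by rw [← abs_mul]; exact le_abs_self _
    have hab : a - b = (R₁ a - R₂ b) + (l₁ * p - l₂ * q) := by linarith
    rw [hab]
    nlinarith [hmono, mul_le_mul_of_nonneg_left habs (by positivity : (0:ℝ) ≤ l₁ + l₂),
      mul_nonneg hl₁.le (sq_nonneg p), mul_nonneg hl₂.le (sq_nonneg q)]
  have hmulint : Integrable (fun x => g₁ x * g₂ x) μ := by
    have hFG := L2.integrable_inner (𝕜 := ℝ) (hg₁L2.toLp g₁) (hg₂L2.toLp g₂)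
    refine hFG.congr ?_
    filter_upwards [hg₁L2.coeFn_toLp, hg₂L2.coeFn_toLp] with x e1 e2
    simp [e1, e2, RCLike.inner_apply, mul_comm]
  have hprodint : Integrable (fun x => |g₁ x| * |g₂ x|) μ := by
    simpa [abs_mul] using hmulint.abs
  have hCS : ∫ x, |g₁ x| * |g₂ x| ∂μ
      ≤ (eLpNorm g₁ 2 μ).toReal * (eLpNorm g₂ 2 μ).toReal := by
    have h1 : MemLp (fun x => |g₁ x|) 2 μ := by
      simpa [Real.norm_eq_abs] using hg₁L2.norm
    have h2 : MemLp (fun x => |g₂ x|) 2 μ := by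
      simpa [Real.norm_eq_abs] using hg₂L2.norm
    have hle := real_inner_le_norm (h1.toLp _) (h2.toLp _)
    rw [L2.inner_def] at hle
    have heq : ∫ a, inner ℝ ((h1.toLp _) a) ((h2.toLp _) a) ∂μ
        = ∫ x, |g₁ x| * |g₂ x| ∂μ := by
      refine integral_congr_ae ?_
      filter_upwards [h1.coeFn_toLp, h2.coeFn_toLp] with x e1 e2
      simp [e1, e2, RCLike.inner_apply, mul_comm]
    have en1 : eLpNorm (fun x => |g₁ x|) 2 μ = eLpNorm g₁ 2 μ := by
      simpa [Real.norm_eq_abs] using eLpNorm_norm (p := (2:ENNReal)) (μ := μ) g₁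
    have en2 : eLpNorm (fun x => |g₂ x|) 2 μ = eLpNorm g₂ 2 μ := by
      simpa [Real.norm_eq_abs] using eLpNorm_norm (p := (2:ENNReal)) (μ := μ) g₂
    rw [heq, Lp.norm_toLp _ h1, Lp.norm_toLp _ h2, en1, en2] at hle
    exact hle
  calc - ∫ x, (g₁ x - g₂ x) * (u₁ x - u₂ x) ∂μ
      = ∫ x, -((g₁ x - g₂ x) * (u₁ x - u₂ x)) ∂μ := (integral_neg _).symm
    _ ≤ ∫ x, (l₁ + l₂) * (|g₁ x| * |g₂ x|) ∂μ :=
        integral_mono hint.neg (hprodint.const_mul _) hptwise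
    _ = (l₁ + l₂) * ∫ x, |g₁ x| * |g₂ x| ∂μ := integral_const_mul _ _
    _ ≤ (l₁ + l₂) * ((eLpNorm g₁ 2 μ).toReal * (eLpNorm g₂ 2 μ).toReal) :=
        mul_le_mul_of_nonneg_left hCS (by positivity)
    _ = (l₁ + l₂) * (eLpNorm g₁ 2 μ).toReal * (eLpNorm g₂ 2 μ).toReal := by ring
end
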